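/- arXiv:1301.5447 — 6 statements merged into one kernel-verified Lean document; each statement's English description precedes it below -/
import Mathlib

section
/- For every δ > 0 and every s > 0 one has ∑_{m=0}^∞ |m − s| · s^m / (m+1)! ≤ δ · (e^s − 1)/s + (1/δ) · (e^s − 2 − s + (e^s − 1)/s). -/
/-!
Termwise, `|x| ≤ δ + x² / δ`, so the series is dominated by `δ` times the total mass of the weights
`s^m / (m+1)!` plus `1/δ` times their second moment about `s`. Both are computed from the Poisson
weights `s^n / n!`: the factorial moments `∑ n(n-1)⋯(n-k+1) s^n / n! = s^k e^s` give
`∑ (n - c)² s^n / n! = ((s - c)² + s) e^s`, and dropping the `n = 0` term and dividing by `s` turns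
the weights `s^n / n!` into `s^m / (m+1)!` with `n = m + 1`.
-/

open Nat Real

lemma abs_le_add_one_div_mul_sq {δ : ℝ} (hδ : 0 < δ) (x : ℝ) : |x| ≤ δ + 1 / δ * x ^ 2 := by
  rw [← mul_le_mul_iff_right₀ hδ, mul_add, ← mul_assoc, mul_one_div_cancel hδ.ne', one_mul]
  nlinarith [two_mul_le_add_sq |x| δ, sq_abs x, abs_nonneg x]

lemma tsum_abs_mul_le_of_hasSum {ι : Type*} {w x : ι → ℝ} {A B δ : ℝ} (hδ : 0 < δ)
    (hw : ∀ i, 0 ≤ w i) (hA : HasSum w A) (hB : HasSum (fun i => x i ^ 2 * w i) B) :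
    ∑' i, |x i| * w i ≤ δ * A + 1 / δ * B := by
  have hbound : ∀ i, |x i| * w i ≤ δ * w i + 1 / δ * (x i ^ 2 * w i) := fun i => by
    calc |x i| * w i ≤ (δ + 1 / δ * x i ^ 2) * w i :=
          mul_le_mul_of_nonneg_right (abs_le_add_one_div_mul_sq hδ (x i)) (hw i)
      _ = δ * w i + 1 / δ * (x i ^ 2 * w i) := by ring
  have hmajorant := (hA.mul_left δ).add (hB.mul_left (1 / δ))
  have hsummable : Summable fun i => |x i| * w i :=
    hmajorant.summable.of_nonneg_of_le (fun i => mul_nonneg (abs_nonneg _) (hw i)) hbound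
  exact hasSum_le hbound hsummable.hasSum hmajorant

lemma hasSum_pow_div_factorial (s : ℝ) : HasSum (fun n => s ^ n / n !) (exp s) :=
  exp_eq_exp_ℝ ▸ NormedSpace.expSeries_div_hasSum_exp s

lemma hasSum_descFactorial_mul_pow_div_factorial (s : ℝ) (k : ℕ) :
    HasSum (fun n => (n.descFactorial k : ℝ) * s ^ n / n !) (s ^ k * exp s) := by
  rw [← hasSum_nat_add_iff' k]
  have hhead : ∑ i ∈ Finset.range k, (i.descFactorial k : ℝ) * s ^ i / i ! = 0 :=
    Finset.sum_eq_zero fun i hi => by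
      rw [Nat.descFactorial_eq_zero_iff_lt.mpr (Finset.mem_range.mp hi)]
      simp
  rw [hhead, sub_zero]
  refine ((hasSum_pow_div_factorial s).mul_left (s ^ k)).congr_fun fun n => ?_
  have hfac := Nat.factorial_mul_descFactorial (Nat.le_add_left k n)
  rw [Nat.add_sub_cancel] at hfac
  rw [← hfac, pow_add]
  push_cast
  field_simp

lemma hasSum_sub_sq_mul_pow_div_factorial (s c : ℝ) :
    HasSum (fun n : ℕ => ((n : ℝ) - c) ^ 2 * s ^ n / n !) (((s - c) ^ 2 + s) * exp s) := by
  have h2 := hasSum_descFactorial_mul_pow_div_factorial s 2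
  have h1 := hasSum_descFactorial_mul_pow_div_factorial s 1
  have h0 := hasSum_descFactorial_mul_pow_div_factorial s 0
  convert (h2.add (h1.mul_left (1 - 2 * c))).add (h0.mul_left (c ^ 2)) using 1
  · funext n
    rw [Nat.cast_descFactorial_two, Nat.descFactorial_one, Nat.descFactorial_zero]
    push_cast
    ring
  · ring

lemma hasSum_mul_pow_div_factorial_succ {s a : ℝ} (hs : s ≠ 0) {q : ℕ → ℝ}
    (h : HasSum (fun n => q n * s ^ n / n !) a) :
    HasSum (fun m => q (m + 1) * s ^ m / (m + 1)!) ((a - q 0) / s) := by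
  rw [← hasSum_nat_add_iff' 1] at h
  simp only [Finset.sum_range_one, pow_zero, Nat.factorial_zero, Nat.cast_one, mul_one,
    div_one] at h
  refine (h.div_const s).congr_fun fun m => ?_
  field_simp
  ring

/-- For every `δ > 0` and every `s > 0`,
`∑_{m=0}^∞ |m − s| s^m / (m+1)! ≤ δ (e^s − 1)/s + (1/δ)(e^s − 2 − s + (e^s − 1)/s)`. -/
theorem stmt1 (δ s : ℝ) (hδ : 0 < δ) (hs : 0 < s) :
    (∑' m : ℕ, |(m : ℝ) - s| * s ^ m / ((m + 1).factorial : ℝ)) ≤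
      δ * (Real.exp s - 1) / s +
        (1 / δ) * (Real.exp s - 2 - s + (Real.exp s - 1) / s) := by
  have hweight : HasSum (fun m : ℕ => s ^ m / (m + 1)!) ((exp s - 1) / s) := by
    simpa using hasSum_mul_pow_div_factorial_succ hs.ne' (q := fun _ => 1)
      (by simpa using hasSum_pow_div_factorial s)
  have hmoment : HasSum (fun m : ℕ => ((m : ℝ) - s) ^ 2 * (s ^ m / (m + 1)!))
      (exp s - 2 - s + (exp s - 1) / s) := by
    have h := hasSum_mul_pow_div_factorial_succ hs.ne'
      (hasSum_sub_sq_mul_pow_div_factorial s (1 + s))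
    rw [show exp s - 2 - s + (exp s - 1) / s
        = (((s - (1 + s)) ^ 2 + s) * exp s - (((0 : ℕ) : ℝ) - (1 + s)) ^ 2) / s by
      field_simp
      ring]
    refine h.congr_fun fun m => ?_
    push_cast
    ring
  calc ∑' m : ℕ, |(m : ℝ) - s| * s ^ m / (m + 1)!
      = ∑' m : ℕ, |(m : ℝ) - s| * (s ^ m / (m + 1)!) := by simp only [mul_div_assoc]
    _ ≤ δ * ((exp s - 1) / s) + 1 / δ * (exp s - 2 - s + (exp s - 1) / s) :=
      tsum_abs_mul_le_of_hasSum hδ (fun m => by positivity) hweight hmoment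
    _ = _ := by rw [mul_div_assoc]
end

section
/- For every γ > 0, b > 0, x ≥ 0 and t > 0 one has ∫_0^∞ p^{γ,b}(x,y,t) dy = 1. -/
open MeasureTheory

/-- The kernel `p^{γ,b}(x,y,t)` for `b > 0`. -/
noncomputable def pker (γ b x y t : ℝ) : ℝ :=
  (γ * t) ^ (-(b / γ)) * Real.exp (-(x + y) / (γ * t)) * y ^ (b / γ - 1) *
    ∑' m : ℕ,
      (x * y) ^ m / ((m.factorial : ℝ) * Real.Gamma ((m : ℝ) + b / γ) * (γ * t) ^ (2 * m))

/-!
With `c = γ t` and `ν = b / γ`, the `m`-th term of the series defining `p^{γ,b}(x, ·, t)` on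
`y > 0` is the Poisson weight `e^{-x/c} (x/c)^m / m!` times the Gamma density of shape `m + ν`
and rate `1/c`. The kernel is therefore a Poisson mixture of Gamma densities; each density has
integral `1` and the weights sum to `1`, and since everything is nonnegative the series may be
integrated term by term.
-/

open Real ProbabilityTheory Set

theorem integral_tsum_mul_eq_one {α : Type*} [MeasurableSpace α] {μ : Measure α}
    {w : ℕ → ℝ} {f : ℕ → α → ℝ} (hw : HasSum w 1) (hw0 : ∀ n, 0 ≤ w n)
    (hf0 : ∀ n a, 0 ≤ f n a) (hf1 : ∀ n, ∫ a, f n a ∂μ = 1) :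
    ∫ a, ∑' n, w n * f n a ∂μ = 1 := by
  have hf : ∀ n, Integrable (f n) μ := fun n => .of_integral_ne_zero (by simp [hf1 n])
  have hnorm : ∀ n, ∫ a, ‖w n * f n a‖ ∂μ = w n := fun n => by
    simp_rw [Real.norm_of_nonneg (mul_nonneg (hw0 n) (hf0 n _))]
    rw [integral_const_mul, hf1 n, mul_one]
  rw [← integral_tsum_of_summable_integral_norm (fun n => (hf n).const_mul (w n))
    (by simpa only [hnorm] using hw.summable)]
  simp_rw [integral_const_mul, hf1, mul_one]
  exact hw.tsum_eq

theorem setIntegral_gammaPDFReal_Ioi {a r : ℝ} (ha : 0 < a) (hr : 0 < r) :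
    ∫ x in Ioi 0, gammaPDFReal a r x = 1 := by
  have hpdf : ∀ x ∈ Ioi (0 : ℝ),
      gammaPDFReal a r x = r ^ a / Gamma a * (x ^ (a - 1) * exp (-(r * x))) :=
    fun x hx => by rw [gammaPDFReal, if_pos (le_of_lt hx), mul_assoc]
  rw [setIntegral_congr_fun measurableSet_Ioi hpdf, integral_const_mul,
    integral_rpow_mul_exp_neg_mul_Ioi ha hr, one_div, inv_rpow hr.le]
  have : Gamma a ≠ 0 := (Gamma_pos_of_pos ha).ne'
  have : r ^ a ≠ 0 := (rpow_pos_of_pos hr a).ne'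
  field_simp

theorem pker_term_eq_mul_gammaPDFReal {c ν x y : ℝ} (hc : 0 < c) (hy : 0 < y) (m : ℕ) :
    c ^ (-ν) * exp (-(x + y) / c) * y ^ (ν - 1) *
        ((x * y) ^ m / ((m.factorial : ℝ) * Gamma ((m : ℝ) + ν) * c ^ (2 * m))) =
      exp (-(x / c)) * (x / c) ^ m / m.factorial * gammaPDFReal ((m : ℝ) + ν) c⁻¹ y := by
  have hexp : exp (-(x + y) / c) = exp (-(x / c)) * exp (-(c⁻¹ * y)) := by
    rw [← exp_add]
    ring_nf
  have hypow : y ^ ((m : ℝ) + ν - 1) = y ^ (ν - 1) * y ^ m := by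
    rw [← rpow_natCast, ← rpow_add hy]
    ring_nf
  have hcpow : c⁻¹ ^ ((m : ℝ) + ν) = c ^ (-ν) * (c ^ m)⁻¹ := by
    rw [inv_rpow hc.le, rpow_add hc, rpow_natCast, rpow_neg hc.le]
    ring
  rw [gammaPDFReal, if_pos hy.le, hexp, hypow, hcpow]
  ring

theorem pker_eq_tsum_mul_gammaPDFReal {γ b x y t : ℝ} (hc : 0 < γ * t) (hy : 0 < y) :
    pker γ b x y t = ∑' m : ℕ, exp (-(x / (γ * t))) * (x / (γ * t)) ^ m / m.factorial *
      gammaPDFReal ((m : ℝ) + b / γ) (γ * t)⁻¹ y := by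
  rw [pker, ← tsum_mul_left]
  exact tsum_congr (pker_term_eq_mul_gammaPDFReal hc hy)

/-- For every `γ > 0`, `b > 0`, `x ≥ 0` and `t > 0`, `∫_0^∞ p^{γ,b}(x,y,t) dy = 1`. -/
theorem stmt4 (γ b x t : ℝ) (hγ : 0 < γ) (hb : 0 < b) (hx : 0 ≤ x) (ht : 0 < t) :
    ∫ y in Set.Ioi (0:ℝ), pker γ b x y t = 1 := by
  have hc : 0 < γ * t := mul_pos hγ ht
  have hshape : ∀ m : ℕ, 0 < (m : ℝ) + b / γ := fun m => by positivity
  rw [setIntegral_congr_fun measurableSet_Ioi fun y hy => pker_eq_tsum_mul_gammaPDFReal hc hy]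
  exact integral_tsum_mul_eq_one (hasSum_one_poissonMeasure ⟨x / (γ * t), by positivity⟩)
    (fun m => by positivity)
    (fun m => gammaPDFReal_nonneg (hshape m) (inv_pos.mpr hc))
    (fun m => setIntegral_gammaPDFReal_Ioi (hshape m) (inv_pos.mpr hc))
end

section
/- Let γ > 0 and b > 0. Then for every x > 0 and t > 0 one has ∫_0^∞ p^{γ,b}(x,y,t) · (y − x) dy = b·t. -/
/-!
For fixed `x` and `t`, `p^{γ,b}(x, ·, t)` is a Poisson mixture of gamma densities: with
`s = γ t`, it is `∑ₘ e^{-x/s} (x/s)^m / m! · Gamma(m + b/γ, rate 1/s)`. The gamma density of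
shape `a` has mean `a s`, and the Poisson weights have mass `1` and mean `x/s`, so the mean of
the mixture is `(x/s + b/γ) s = x + b t`. Integrating term by term is justified because the
first absolute moments of the components are summable against the weights.
-/

open MeasureTheory

open Real Set ProbabilityTheory
open scoped Nat

section GammaMoments

variable {a r : ℝ}

lemma gammaPDFReal_of_pos {y : ℝ} (hy : 0 < y) :
    gammaPDFReal a r y = r ^ a / Gamma a * (y ^ (a - 1) * exp (-(r * y))) := by
  rw [gammaPDFReal, if_pos hy.le, mul_assoc]

lemma integrableOn_gammaPDFReal (ha : 0 < a) (hr : 0 < r) :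
    IntegrableOn (gammaPDFReal a r) (Ioi 0) := by
  refine IntegrableOn.congr_fun ((integrableOn_rpow_mul_exp_neg_mul_rpow (s := a - 1)
    (by linarith) one_pos hr).const_mul (r ^ a / Gamma a)) (fun y hy => ?_) measurableSet_Ioi
  rw [gammaPDFReal_of_pos hy, rpow_one, neg_mul]

lemma setIntegral_gammaPDFReal (ha : 0 < a) (hr : 0 < r) :
    ∫ y in Ioi 0, gammaPDFReal a r y = 1 := by
  rw [setIntegral_congr_fun measurableSet_Ioi fun y hy => gammaPDFReal_of_pos hy,
    integral_const_mul, integral_rpow_mul_exp_neg_mul_Ioi ha hr, div_rpow zero_le_one hr.le,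
    one_rpow]
  field_simp [(Gamma_pos_of_pos ha).ne', (rpow_pos_of_pos hr a).ne']

lemma mul_gammaPDFReal (ha : 0 < a) (hr : 0 < r) {y : ℝ} (hy : 0 < y) :
    y * gammaPDFReal a r y = a / r * gammaPDFReal (a + 1) r y := by
  rw [gammaPDFReal_of_pos hy, gammaPDFReal_of_pos hy, Gamma_add_one ha.ne', rpow_add_one hr.ne',
    add_sub_cancel_right, rpow_sub_one hy.ne']
  field_simp [(Gamma_pos_of_pos ha).ne']

lemma integrableOn_mul_gammaPDFReal (ha : 0 < a) (hr : 0 < r) :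
    IntegrableOn (fun y => y * gammaPDFReal a r y) (Ioi 0) :=
  IntegrableOn.congr_fun ((integrableOn_gammaPDFReal (by linarith) hr).const_mul (a / r))
    (fun _ hy => (mul_gammaPDFReal ha hr hy).symm) measurableSet_Ioi

lemma setIntegral_mul_gammaPDFReal (ha : 0 < a) (hr : 0 < r) :
    ∫ y in Ioi 0, y * gammaPDFReal a r y = a / r := by
  rw [setIntegral_congr_fun measurableSet_Ioi fun _ hy => mul_gammaPDFReal ha hr hy,
    integral_const_mul, setIntegral_gammaPDFReal (by linarith) hr, mul_one]

lemma integrableOn_gammaPDFReal_mul_sub (ha : 0 < a) (hr : 0 < r) (c : ℝ) :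
    IntegrableOn (fun y => gammaPDFReal a r y * (y - c)) (Ioi 0) := by
  simp_rw [mul_sub, mul_comm (gammaPDFReal a r _) _]
  exact (integrableOn_mul_gammaPDFReal ha hr).sub ((integrableOn_gammaPDFReal ha hr).const_mul c)

lemma setIntegral_gammaPDFReal_mul_sub (ha : 0 < a) (hr : 0 < r) (c : ℝ) :
    ∫ y in Ioi 0, gammaPDFReal a r y * (y - c) = a / r - c := by
  simp_rw [mul_sub, mul_comm (gammaPDFReal a r _) _]
  rw [integral_sub (integrableOn_mul_gammaPDFReal ha hr)
      ((integrableOn_gammaPDFReal ha hr).const_mul c), integral_const_mul,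
    setIntegral_mul_gammaPDFReal ha hr, setIntegral_gammaPDFReal ha hr, mul_one]

end GammaMoments

noncomputable def poissonWeight (u : ℝ) (m : ℕ) : ℝ := exp (-u) * (u ^ m / m !)

lemma poissonWeight_nonneg {u : ℝ} (hu : 0 ≤ u) (m : ℕ) : 0 ≤ poissonWeight u m := by
  unfold poissonWeight; positivity

lemma hasSum_poissonWeight (u : ℝ) : HasSum (poissonWeight u) 1 := by
  have hexp : HasSum (fun m : ℕ => u ^ m / m !) (exp u) := by
    rw [exp_eq_exp_ℝ]; exact NormedSpace.expSeries_div_hasSum_exp u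
  have h := hexp.mul_left (exp (-u))
  rwa [← exp_add, neg_add_cancel, exp_zero] at h

lemma succ_mul_poissonWeight_succ (u : ℝ) (m : ℕ) :
    ((m + 1 : ℕ) : ℝ) * poissonWeight u (m + 1) = u * poissonWeight u m := by
  simp only [poissonWeight, Nat.factorial_succ, pow_succ, Nat.cast_mul]
  field_simp

lemma hasSum_mul_poissonWeight (u : ℝ) : HasSum (fun m : ℕ => m * poissonWeight u m) u := by
  rw [← hasSum_nat_add_iff' 1]
  simpa only [succ_mul_poissonWeight_succ, Finset.sum_range_one, Nat.cast_zero, zero_mul,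
    sub_zero, mul_one] using (hasSum_poissonWeight u).mul_left u

lemma integral_tsum_mul_gammaPDFReal_mul_sub {w a : ℕ → ℝ} {r c W M : ℝ}
    (hw : ∀ m, 0 ≤ w m) (ha : ∀ m, 0 < a m) (hr : 0 < r)
    (hW : HasSum w W) (hM : HasSum (fun m => w m * (a m / r)) M) :
    ∫ y in Ioi 0, (∑' m, w m * gammaPDFReal (a m) r y) * (y - c) = M - c * W := by
  set F : ℕ → ℝ → ℝ := fun m y => w m * (gammaPDFReal (a m) r y * (y - c))
  have hF : ∀ m, IntegrableOn (F m) (Ioi 0) := fun m =>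
    (integrableOn_gammaPDFReal_mul_sub (ha m) hr c).const_mul (w m)
  have hF_norm : ∀ m, ∫ y in Ioi 0, ‖F m y‖ ≤ w m * (a m / r + |c|) := by
    intro m
    rw [← sub_neg_eq_add (a m / r), ← setIntegral_gammaPDFReal_mul_sub (ha m) hr (-|c|),
      ← integral_const_mul]
    refine setIntegral_mono_on (hF m).norm
      ((integrableOn_gammaPDFReal_mul_sub (ha m) hr _).const_mul _) measurableSet_Ioi
      fun y (hy : 0 < y) => ?_
    have hpdf := gammaPDFReal_nonneg (ha m) hr y
    have hyc : |y - c| ≤ y - -|c| := by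
      rw [sub_neg_eq_add]
      exact (abs_sub _ _).trans (by rw [abs_of_pos hy])
    simp only [F, norm_mul, Real.norm_eq_abs, abs_of_nonneg (hw m), abs_of_nonneg hpdf]
    exact mul_le_mul_of_nonneg_left (mul_le_mul_of_nonneg_left hyc hpdf) (hw m)
  have hF_sum : Summable fun m => ∫ y in Ioi 0, ‖F m y‖ := by
    refine Summable.of_nonneg_of_le (fun m => integral_nonneg fun y => norm_nonneg _) hF_norm ?_
    exact (hM.add (hW.mul_right |c|)).summable.congr fun m => by ring
  have hF_integral : ∀ m, ∫ y in Ioi 0, F m y = w m * (a m / r) - c * w m := fun m => by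
    rw [integral_const_mul, setIntegral_gammaPDFReal_mul_sub (ha m) hr]; ring
  have hint := hasSum_integral_of_summable_integral_norm hF hF_sum
  simp_rw [hF_integral] at hint
  have hpointwise : ∀ y, (∑' m, w m * gammaPDFReal (a m) r y) * (y - c) = ∑' m, F m y :=
    fun y => by rw [← tsum_mul_right]; simp only [F, mul_assoc]
  simp_rw [hpointwise]
  exact hint.unique (hM.sub (hW.mul_left c))

lemma pker_eq_tsum {γ b x y t : ℝ} (hs : 0 < γ * t) (hy : 0 < y) :
    pker γ b x y t =
      ∑' m : ℕ, poissonWeight (x / (γ * t)) m * gammaPDFReal (m + b / γ) (γ * t)⁻¹ y := by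
  rw [pker, ← tsum_mul_left]
  refine tsum_congr fun m => ?_
  rw [poissonWeight, gammaPDFReal_of_pos hy, inv_rpow hs.le, rpow_add hs, rpow_natCast,
    add_sub_assoc, rpow_add hy, rpow_natCast, rpow_neg hs.le,
    show -(x + y) / (γ * t) = -(x / (γ * t)) + -((γ * t)⁻¹ * y) by ring, exp_add, mul_pow,
    pow_mul]
  ring

/-- For `γ > 0`, `b > 0`, `x > 0` and `t > 0`, `∫_0^∞ p^{γ,b}(x,y,t)(y − x) dy = b t`. -/
theorem stmt5 (γ b : ℝ) (hγ : 0 < γ) (hb : 0 < b) (x t : ℝ) (hx : 0 < x) (ht : 0 < t) :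
    ∫ y in Set.Ioi (0:ℝ), pker γ b x y t * (y - x) = b * t := by
  have hs : 0 < γ * t := mul_pos hγ ht
  set u := x / (γ * t) with hu
  have hmean :
      HasSum (fun m : ℕ => poissonWeight u m * ((m + b / γ) / (γ * t)⁻¹)) (x + b * t) := by
    have h := ((hasSum_mul_poissonWeight u).add
      ((hasSum_poissonWeight u).mul_left (b / γ))).mul_right (γ * t)
    rw [show (u + b / γ * 1) * (γ * t) = x + b * t by rw [hu]; field_simp] at h
    exact h.congr_fun fun m => by rw [div_inv_eq_mul]; ring
  rw [setIntegral_congr_fun measurableSet_Ioi fun y hy => by rw [pker_eq_tsum hs hy],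
    integral_tsum_mul_gammaPDFReal_mul_sub (poissonWeight_nonneg (by positivity))
      (fun m => by positivity) (inv_pos.2 hs) (hasSum_poissonWeight u) hmean]
  ring
end

section
/- Let γ > 0 and b > 0. Then for every natural number k ≥ 1 and every x > 0, t > 0 one has ∫_0^∞ p^{γ,b}(x,y,t)(y−x)^{k+1} dy = −x·∫_0^∞ p^{γ,b}(x,y,t)(y−x)^k dy + b·t·∫_0^∞ p^{γ,b+γ}(x,y,t)(y−x)^k dy + x·∫_0^∞ p^{γ,b+2γ}(x,y,t)(y−x)^k dy. -/
/-!
Multiplying the kernel by `y` shifts the Gamma factors of its series: from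
`Γ(m + c + 1) = (m + c) Γ(m + c)` one gets `y p^{γ,b} = b t p^{γ,b+γ} + x p^{γ,b+2γ}`, and since
`y (y - x)^k = (y - x)^{k+1} + x (y - x)^k` the moment identity is this relation integrated
against `(y - x)^k`.

The analytic input is integrability of every moment. The bounds
`Γ(m + c) ≥ min (Γ c) (Γ (c + 1)) (m - 1)!` and `(2m)! ≤ 8^m m! (m - 1)!` dominate the series by a
constant times `exp (√(8xy) / (γt))`, and `√(8xy) ≤ 4x + y/2` leaves the Gamma-type density
`y^{b/γ - 1} e^{-y/(2γt)}`.
-/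

open MeasureTheory

open Real Set Filter Topology
open scoped Nat

theorem Nat.factorial_le_two_pow_mul_factorial_pred (m : ℕ) : m ! ≤ 2 ^ m * (m - 1)! := by
  cases m with
  | zero => simp
  | succ n =>
    rw [Nat.factorial_succ, Nat.add_sub_cancel]
    exact Nat.mul_le_mul_right _ (Nat.lt_two_pow_self).le

theorem Nat.factorial_two_mul_le_eight_pow_mul (m : ℕ) : (2 * m)! ≤ 8 ^ m * m ! * (m - 1)! := by
  calc (2 * m)! = m.centralBinom * m ! * m ! := by
        rw [Nat.centralBinom, ← Nat.choose_mul_factorial_mul_factorial (by omega : m ≤ 2 * m),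
          show 2 * m - m = m by omega]
    _ ≤ 4 ^ m * m ! * (2 ^ m * (m - 1)!) := by
        gcongr
        · exact Nat.centralBinom_le_four_pow m
        · exact Nat.factorial_le_two_pow_mul_factorial_pred m
    _ = 8 ^ m * m ! * (m - 1)! := by
        rw [show (8 : ℕ) = 4 * 2 by rfl, mul_pow]; ring

theorem Real.Gamma_add_one_mul_factorial_le_Gamma_nat_add {c : ℝ} (hc : 0 < c) (n : ℕ) :
    Gamma (c + 1) * n ! ≤ Gamma (n + 1 + c) := by
  induction n with
  | zero => simp [add_comm]
  | succ n ih =>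
    have hpos : 0 < (n : ℝ) + 1 + c := by positivity
    rw [Nat.factorial_succ, Nat.cast_mul, Nat.cast_succ,
      show ((n : ℝ) + 1 + 1 + c) = ((n : ℝ) + 1 + c) + 1 by ring, Gamma_add_one hpos.ne']
    have hΓ : 0 ≤ Gamma (c + 1) * n ! := by
      have := Gamma_pos_of_pos (by linarith : 0 < c + 1); positivity
    nlinarith

theorem Real.min_Gamma_mul_factorial_pred_le_Gamma_nat_add {c : ℝ} (hc : 0 < c) (m : ℕ) :
    min (Gamma c) (Gamma (c + 1)) * (m - 1)! ≤ Gamma (m + c) := by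
  cases m with
  | zero => simp
  | succ n =>
    simpa using (mul_le_mul_of_nonneg_right (min_le_right _ _) (by positivity)).trans
      (Gamma_add_one_mul_factorial_le_Gamma_nat_add hc n)

/-- With `z = w / s²` this is `z^{(1-c)/2} I_{c-1}(2√z)`, a regularized modified Bessel function. -/
noncomputable def besselSeries (c s w : ℝ) : ℝ :=
  ∑' m : ℕ, w ^ m / ((m ! : ℝ) * Gamma (m + c) * s ^ (2 * m))

section besselSeries

variable {c s : ℝ}

theorem besselSeries_term_le (hc : 0 < c) (hs : 0 < s) {w : ℝ} (hw : 0 ≤ w) (m : ℕ) :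
    w ^ m / ((m ! : ℝ) * Gamma (m + c) * s ^ (2 * m)) ≤
      (min (Gamma c) (Gamma (c + 1)))⁻¹ * ((√(8 * w) / s) ^ (2 * m) / (2 * m)!) := by
  set K := min (Gamma c) (Gamma (c + 1))
  have hK : 0 < K := lt_min (Gamma_pos_of_pos hc) (Gamma_pos_of_pos (by linarith))
  have hΓ : 0 < Gamma (m + c) := Gamma_pos_of_pos (by positivity)
  have hfact : K * (2 * m)! ≤ 8 ^ m * m ! * Gamma (m + c) :=
    calc K * (2 * m)! ≤ K * (8 ^ m * m ! * (m - 1)! : ℕ) := by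
          gcongr; exact Nat.factorial_two_mul_le_eight_pow_mul m
      _ = 8 ^ m * m ! * (K * (m - 1)!) := by push_cast; ring
      _ ≤ 8 ^ m * m ! * Gamma (m + c) := by
          gcongr; exact min_Gamma_mul_factorial_pred_le_Gamma_nat_add hc m
  have hpow : (√(8 * w) / s) ^ (2 * m) = 8 ^ m * w ^ m / s ^ (2 * m) := by
    rw [div_pow, pow_mul, Real.sq_sqrt (by positivity), mul_pow]
  have hrhs : K⁻¹ * (8 ^ m * w ^ m / s ^ (2 * m) / (2 * m)!) =
      8 ^ m * w ^ m / (K * (2 * m)! * s ^ (2 * m)) := by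
    field_simp
  rw [hpow, hrhs, div_le_div_iff₀ (by positivity) (by positivity)]
  calc w ^ m * (K * (2 * m)! * s ^ (2 * m))
      ≤ w ^ m * (8 ^ m * m ! * Gamma (m + c) * s ^ (2 * m)) := by gcongr
    _ = 8 ^ m * w ^ m * (m ! * Gamma (m + c) * s ^ (2 * m)) := by ring

theorem summable_besselSeries (hc : 0 < c) (hs : 0 < s) (w : ℝ) :
    Summable fun m : ℕ ↦ w ^ m / ((m ! : ℝ) * Gamma (m + c) * s ^ (2 * m)) := by
  refine .of_norm_bounded
    (((hasSum_cosh (√(8 * |w|) / s)).summable.mul_left (min (Gamma c) (Gamma (c + 1)))⁻¹))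
    fun m ↦ ?_
  have hΓ : 0 < Gamma (m + c) := Gamma_pos_of_pos (by positivity)
  rw [norm_div, norm_pow, Real.norm_eq_abs, Real.norm_of_nonneg (by positivity)]
  exact besselSeries_term_le hc hs (abs_nonneg w) m

theorem besselSeries_le_exp (hc : 0 < c) (hs : 0 < s) {w : ℝ} (hw : 0 ≤ w) :
    besselSeries c s w ≤ (min (Gamma c) (Gamma (c + 1)))⁻¹ * exp (√(8 * w) / s) := by
  have hK : 0 < min (Gamma c) (Gamma (c + 1)) :=
    lt_min (Gamma_pos_of_pos hc) (Gamma_pos_of_pos (by linarith))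
  have hr : 0 ≤ √(8 * w) / s := by positivity
  have hcosh : cosh (√(8 * w) / s) ≤ exp (√(8 * w) / s) := by
    rw [cosh_eq]
    linarith [exp_le_exp.mpr (neg_le_self hr)]
  calc besselSeries c s w ≤ (min (Gamma c) (Gamma (c + 1)))⁻¹ * cosh (√(8 * w) / s) :=
        hasSum_le (besselSeries_term_le hc hs hw) (summable_besselSeries hc hs w).hasSum
          ((hasSum_cosh _).mul_left _)
    _ ≤ _ := by gcongr

theorem besselSeries_eq_add (hc : 0 < c) (hs : 0 < s) (w : ℝ) :
    besselSeries c s w = c * besselSeries (c + 1) s w + w / s ^ 2 * besselSeries (c + 2) s w := by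
  set a : ℕ → ℝ := fun m ↦ w ^ m / ((m ! : ℝ) * Gamma (m + (c + 1)) * s ^ (2 * m))
  set b : ℕ → ℝ := fun m ↦ w ^ m / ((m ! : ℝ) * Gamma (m + (c + 2)) * s ^ (2 * m))
  -- `Γ(m + c + 1) = (m + c) Γ(m + c)` splits each term in two
  have hsplit (m : ℕ) : w ^ m / ((m ! : ℝ) * Gamma (m + c) * s ^ (2 * m)) = c * a m + m * a m := by
    have hmc : 0 < (m : ℝ) + c := by positivity
    have hΓ := Gamma_pos_of_pos hmc
    simp only [a, show (m : ℝ) + (c + 1) = m + c + 1 by ring, Gamma_add_one hmc.ne']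
    field_simp
    ring
  -- and `m! = m (m - 1)!` turns the second part into the shifted series with `c + 2`
  have hshift (n : ℕ) : ((n + 1 : ℕ) : ℝ) * a (n + 1) = w / s ^ 2 * b n := by
    have hΓ : 0 < Gamma (n + (c + 2)) := Gamma_pos_of_pos (by positivity)
    simp only [a, b, Nat.factorial_succ, show ((n + 1 : ℕ) : ℝ) + (c + 1) = n + (c + 2) by
      push_cast; ring, show 2 * (n + 1) = 2 * n + 2 by ring, pow_add, pow_succ w]
    push_cast
    field_simp
  have ha : Summable a := summable_besselSeries (by linarith) hs w
  have hma : Summable fun m : ℕ ↦ (m : ℝ) * a m :=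
    (summable_nat_add_iff 1).mp <|
      ((summable_besselSeries (by linarith) hs w).mul_left (w / s ^ 2)).congr
        fun n ↦ (hshift n).symm
  calc besselSeries c s w = ∑' m, (c * a m + m * a m) := tsum_congr hsplit
    _ = c * ∑' m, a m + ∑' m : ℕ, (m : ℝ) * a m := by
        rw [(ha.mul_left c).tsum_add hma, tsum_mul_left]
    _ = c * besselSeries (c + 1) s w + w / s ^ 2 * besselSeries (c + 2) s w := by
        rw [hma.tsum_eq_zero_add, tsum_congr hshift, tsum_mul_left]
        simp only [Nat.cast_zero, zero_mul, zero_add, a]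
        rfl

theorem measurable_besselSeries (hc : 0 < c) (hs : 0 < s) : Measurable (besselSeries c s) :=
  measurable_of_tendsto_metrizable (fun n ↦ Finset.measurable_sum _ fun m _ ↦ by fun_prop)
    (tendsto_pi_nhds.mpr fun w ↦ (summable_besselSeries hc hs w).hasSum.tendsto_sum_nat)

end besselSeries

theorem integrableOn_mul_sub_pow_of_le_rpow_mul_exp {f : ℝ → ℝ}
    (hf : AEStronglyMeasurable f (volume.restrict (Ioi 0))) {C r β : ℝ} (hr : -1 < r) (hβ : 0 < β)
    (hle : ∀ y ∈ Ioi (0 : ℝ), ‖f y‖ ≤ C * y ^ r * exp (-β * y)) (x : ℝ) (k : ℕ) :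
    IntegrableOn (fun y ↦ f y * (y - x) ^ k) (Ioi 0) := by
  have hint (p : ℝ) (hp : 0 ≤ p) : IntegrableOn (fun y : ℝ ↦ y ^ (r + p) * exp (-β * y)) (Ioi 0) := by
    simpa using integrableOn_rpow_mul_exp_neg_mul_rpow (p := 1) (by linarith) one_pos hβ
  refine Integrable.mono'
    (((hint 0 le_rfl).const_mul (C * 2 ^ (k - 1) * |x| ^ k)).add
      ((hint k k.cast_nonneg).const_mul (C * 2 ^ (k - 1))))
    (hf.mul (by fun_prop)) ((ae_restrict_iff' measurableSet_Ioi).mpr (.of_forall fun y hy ↦ ?_))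
  have hy : 0 < y := hy
  have hsub : |y - x| ^ k ≤ 2 ^ (k - 1) * (|x| ^ k + y ^ k) :=
    calc |y - x| ^ k ≤ (|x| + y) ^ k := by
          gcongr; rw [abs_sub_le_iff]; constructor <;> linarith [le_abs_self x, neg_abs_le x]
      _ ≤ 2 ^ (k - 1) * (|x| ^ k + y ^ k) := add_pow_le (abs_nonneg x) hy.le k
  have hrpow : y ^ (r + k) = y ^ r * y ^ k := by rw [rpow_add hy, rpow_natCast]
  calc ‖f y * (y - x) ^ k‖ = ‖f y‖ * |y - x| ^ k := by
        rw [norm_mul, norm_pow, Real.norm_eq_abs, Real.norm_eq_abs]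
    _ ≤ C * y ^ r * exp (-β * y) * (2 ^ (k - 1) * (|x| ^ k + y ^ k)) :=
        mul_le_mul (hle y hy) hsub (by positivity) ((norm_nonneg _).trans (hle y hy))
    _ = _ := by simp only [Pi.add_apply, add_zero, hrpow]; ring

theorem pker_eq_besselSeries (γ b x y t : ℝ) :
    pker γ b x y t = (γ * t) ^ (-(b / γ)) * exp (-(x + y) / (γ * t)) * y ^ (b / γ - 1) *
      besselSeries (b / γ) (γ * t) (x * y) :=
  rfl

section pker

variable {γ b x t : ℝ}

theorem pker_mul_self (hγ : 0 < γ) (hb : 0 < b) (ht : 0 < t) {y : ℝ} (hy : 0 < y) :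
    pker γ b x y t * y = b * t * pker γ (b + γ) x y t + x * pker γ (b + 2 * γ) x y t := by
  have hs : 0 < γ * t := mul_pos hγ ht
  have hshift1 : (b + γ) / γ = b / γ + 1 := by field_simp
  have hshift2 : (b + 2 * γ) / γ = b / γ + 2 := by field_simp
  simp only [pker_eq_besselSeries, hshift1, hshift2,
    besselSeries_eq_add (div_pos hb hγ) hs (x * y),
    show -(b / γ + 1) = -(b / γ) - 1 by ring, show -(b / γ + 2) = -(b / γ) - 2 by ring,
    show b / γ + 1 - 1 = b / γ - 1 + 1 by ring, show b / γ + 2 - 1 = b / γ - 1 + 2 by ring,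
    rpow_sub hs, rpow_add hy, rpow_one, rpow_two]
  field_simp

theorem pker_nonneg (hγ : 0 < γ) (hb : 0 < b) (ht : 0 < t) (hx : 0 ≤ x) {y : ℝ} (hy : 0 ≤ y) :
    0 ≤ pker γ b x y t := by
  have hs : 0 < γ * t := mul_pos hγ ht
  refine mul_nonneg (by positivity) (tsum_nonneg fun m ↦ ?_)
  have := Gamma_pos_of_pos (by positivity : 0 < (m : ℝ) + b / γ)
  positivity

theorem pker_le (hγ : 0 < γ) (hb : 0 < b) (ht : 0 < t) (hx : 0 ≤ x) {y : ℝ} (hy : 0 < y) :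
    pker γ b x y t ≤ (γ * t) ^ (-(b / γ)) * (min (Gamma (b / γ)) (Gamma (b / γ + 1)))⁻¹ *
      exp (3 * x / (γ * t)) * y ^ (b / γ - 1) * exp (-(1 / (2 * (γ * t))) * y) := by
  have hs : 0 < γ * t := mul_pos hγ ht
  -- AM-GM: `√(8 x y) = 2 √(4x · y/2) ≤ 4x + y/2`
  have hamgm : √(8 * (x * y)) ≤ 4 * x + y / 2 :=
    sqrt_le_iff.mpr ⟨by positivity, by nlinarith [sq_nonneg (4 * x - y / 2)]⟩
  have hexp : exp (-(x + y) / (γ * t)) * exp (√(8 * (x * y)) / (γ * t)) ≤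
      exp (3 * x / (γ * t)) * exp (-(1 / (2 * (γ * t))) * y) := by
    rw [← exp_add, ← exp_add, exp_le_exp, ← sub_nonneg]
    have : 0 ≤ (4 * x + y / 2 - √(8 * (x * y))) / (γ * t) := div_nonneg (by linarith) hs.le
    convert this using 1
    field_simp
    ring
  calc pker γ b x y t ≤ (γ * t) ^ (-(b / γ)) * exp (-(x + y) / (γ * t)) * y ^ (b / γ - 1) *
        ((min (Gamma (b / γ)) (Gamma (b / γ + 1)))⁻¹ * exp (√(8 * (x * y)) / (γ * t))) := by
        rw [pker_eq_besselSeries]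
        gcongr
        exact besselSeries_le_exp (div_pos hb hγ) hs (by positivity)
    _ = (γ * t) ^ (-(b / γ)) * (min (Gamma (b / γ)) (Gamma (b / γ + 1)))⁻¹ * y ^ (b / γ - 1) *
        (exp (-(x + y) / (γ * t)) * exp (√(8 * (x * y)) / (γ * t))) := by ring
    _ ≤ (γ * t) ^ (-(b / γ)) * (min (Gamma (b / γ)) (Gamma (b / γ + 1)))⁻¹ * y ^ (b / γ - 1) *
        (exp (3 * x / (γ * t)) * exp (-(1 / (2 * (γ * t))) * y)) := by
        have := Gamma_pos_of_pos (div_pos hb hγ)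
        have := Gamma_pos_of_pos (by positivity : 0 < b / γ + 1)
        gcongr
    _ = _ := by ring

theorem measurable_pker (hγ : 0 < γ) (hb : 0 < b) (ht : 0 < t) :
    Measurable fun y ↦ pker γ b x y t := by
  simp only [pker_eq_besselSeries]
  have := (measurable_besselSeries (div_pos hb hγ) (mul_pos hγ ht)).comp (measurable_const_mul x)
  fun_prop

theorem integrableOn_pker_mul_sub_pow (hγ : 0 < γ) (hb : 0 < b) (ht : 0 < t) (hx : 0 ≤ x)
    (k : ℕ) : IntegrableOn (fun y ↦ pker γ b x y t * (y - x) ^ k) (Ioi 0) :=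
  integrableOn_mul_sub_pow_of_le_rpow_mul_exp (r := b / γ - 1) (β := 1 / (2 * (γ * t)))
    (measurable_pker hγ hb ht).aestronglyMeasurable
    (by linarith [div_pos hb hγ]) (by have := mul_pos hγ ht; positivity)
    (fun y hy ↦ by
      rw [Real.norm_of_nonneg (pker_nonneg hγ hb ht hx (le_of_lt hy))]
      exact pker_le hγ hb ht hx hy)
    x k

end pker

theorem stmt6_general (γ b : ℝ) (hγ : 0 < γ) (hb : 0 < b) (k : ℕ)
    (x t : ℝ) (hx : 0 < x) (ht : 0 < t) :
    (∫ y in Set.Ioi (0:ℝ), pker γ b x y t * (y - x) ^ (k + 1)) =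
      -x * (∫ y in Set.Ioi (0:ℝ), pker γ b x y t * (y - x) ^ k) +
        b * t * (∫ y in Set.Ioi (0:ℝ), pker γ (b + γ) x y t * (y - x) ^ k) +
          x * ∫ y in Set.Ioi (0:ℝ), pker γ (b + 2 * γ) x y t * (y - x) ^ k := by
  have hint {b' : ℝ} (hb' : 0 < b') := integrableOn_pker_mul_sub_pow hγ hb' ht hx.le k
  have hpointwise : EqOn (fun y ↦ pker γ b x y t * (y - x) ^ (k + 1))
      (fun y ↦ -x * (pker γ b x y t * (y - x) ^ k) + b * t * (pker γ (b + γ) x y t * (y - x) ^ k)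
        + x * (pker γ (b + 2 * γ) x y t * (y - x) ^ k)) (Ioi 0) := fun y hy ↦ by
    linear_combination (y - x) ^ k * pker_mul_self (x := x) hγ hb ht hy
  have h₀ := (hint hb).const_mul (-x)
  have h₁ := (hint (add_pos hb hγ)).const_mul (b * t)
  have h₂ := (hint (by positivity : 0 < b + 2 * γ)).const_mul x
  rw [setIntegral_congr_fun measurableSet_Ioi hpointwise, integral_add ?_ h₂,
    integral_add h₀ h₁, integral_const_mul, integral_const_mul, integral_const_mul]
  exact h₀.add h₁

/-- For `γ > 0`, `b > 0`, `k ≥ 1`, `x > 0`, `t > 0`: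
`∫ p^{γ,b}(x,y,t)(y−x)^{k+1} dy = −x ∫ p^{γ,b}(x,y,t)(y−x)^k dy
 + b t ∫ p^{γ,b+γ}(x,y,t)(y−x)^k dy + x ∫ p^{γ,b+2γ}(x,y,t)(y−x)^k dy`. -/
theorem stmt6 (γ b : ℝ) (hγ : 0 < γ) (hb : 0 < b) (k : ℕ) (hk : 1 ≤ k)
    (x t : ℝ) (hx : 0 < x) (ht : 0 < t) :
    (∫ y in Set.Ioi (0:ℝ), pker γ b x y t * (y - x) ^ (k + 1)) =
      -x * (∫ y in Set.Ioi (0:ℝ), pker γ b x y t * (y - x) ^ k) +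
        b * t * (∫ y in Set.Ioi (0:ℝ), pker γ (b + γ) x y t * (y - x) ^ k) +
          x * ∫ y in Set.Ioi (0:ℝ), pker γ (b + 2 * γ) x y t * (y - x) ^ k :=
  stmt6_general γ b hγ hb k x t hx ht
end

section
/- Let γ > 0 and b ≥ 0, and let u ∈ D(A^{γ,b}). Then lim_{x → 0⁺} x·u'(x) = 0 and lim_{x → +∞} u'(x) = 0. -/
/-! Near `0` with `b = 0`, the bound `|t u''(t)| ≤ C` integrates to `|u'(x)| = O(log (1/x))`, and
`x log x → 0`; for `b > 0`, `u'` is even continuous at `0`. At `+∞` with `b = 0`, `t u''(t) → 0`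
makes `u'` almost constant on `[x, 2x]`, so by the mean value theorem `u'(x)` is close to
`(u(2x) - u(x)) / x → 0`. For `b > 0`, `g(x) = x^α u'(x)` with `α = b/γ` has
`g'(x) = x^(α-1) (x u''(x) + α u'(x)) = o(x^(α-1))`, hence `g(x) = o(x^α)`. -/

open MeasureTheory

/-- The first derivative of `u` on `[0,∞)` (one-sided at `0`). -/
noncomputable def d1 (u : ℝ → ℝ) : ℝ → ℝ := derivWithin u (Set.Ici 0)

/-- The second derivative of `u` on `[0,∞)` (one-sided at `0`). -/
noncomputable def d2 (u : ℝ → ℝ) : ℝ → ℝ := derivWithin (derivWithin u (Set.Ici 0)) (Set.Ici 0)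

/-- `u ∈ D(A^{γ,b})`. For `b > 0`: `u` is `C¹` on `[0,∞)`, `C²` on `(0,∞)`, has a finite limit
at `+∞`, `x u''(x) → 0` as `x → 0⁺`, and `γ x u''(x) + b u'(x) → 0` as `x → +∞`.
For `b = 0`: `u` is continuous on `[0,∞)`, `C²` on `(0,∞)`, has a finite limit at `+∞`,
`γ x u''(x) → 0` as `x → 0⁺` and as `x → +∞`. -/
def memDomain (γ b : ℝ) (u : ℝ → ℝ) : Prop :=
  (0 < b ∧ ContDiffOn ℝ 1 u (Set.Ici 0) ∧ ContDiffOn ℝ 2 u (Set.Ioi 0) ∧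
    (∃ l, Filter.Tendsto u Filter.atTop (nhds l)) ∧
    Filter.Tendsto (fun x => x * d2 u x) (nhdsWithin 0 (Set.Ioi 0)) (nhds 0) ∧
    Filter.Tendsto (fun x => γ * x * d2 u x + b * d1 u x) Filter.atTop (nhds 0)) ∨
  (b = 0 ∧ ContinuousOn u (Set.Ici 0) ∧ ContDiffOn ℝ 2 u (Set.Ioi 0) ∧
    (∃ l, Filter.Tendsto u Filter.atTop (nhds l)) ∧
    Filter.Tendsto (fun x => γ * x * d2 u x) (nhdsWithin 0 (Set.Ioi 0)) (nhds 0) ∧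
    Filter.Tendsto (fun x => γ * x * d2 u x) Filter.atTop (nhds 0))

open Set Filter Topology Real

theorem norm_sub_le_sub_of_norm_deriv_le {E : Type*} [NormedAddCommGroup E] [NormedSpace ℝ E]
    {f f' : ℝ → E} {B B' : ℝ → ℝ} {a b : ℝ} (hab : a ≤ b)
    (hf : ∀ x ∈ Icc a b, HasDerivAt f (f' x) x) (hB : ∀ x ∈ Icc a b, HasDerivAt B (B' x) x)
    (bound : ∀ x ∈ Ico a b, ‖f' x‖ ≤ B' x) :
    ‖f b - f a‖ ≤ B b - B a := by
  have hf₀ : ∀ x ∈ Icc a b, HasDerivAt (fun y => f y - f a) (f' x) x :=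
    fun x hx => (hf x hx).sub_const (f a)
  have hB₀ : ∀ x ∈ Icc a b, HasDerivAt (fun y => B y - B a) (B' x) x :=
    fun x hx => (hB x hx).sub_const (B a)
  refine image_norm_le_of_norm_deriv_right_le_deriv_boundary'
    (fun x hx => (hf₀ x hx).continuousAt.continuousWithinAt)
    (fun x hx => (hf₀ x (Ico_subset_Icc_self hx)).hasDerivWithinAt) (by simp)
    (fun x hx => (hB₀ x hx).continuousAt.continuousWithinAt)
    (fun x hx => (hB₀ x (Ico_subset_Icc_self hx)).hasDerivWithinAt) bound ⟨hab, le_rfl⟩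

theorem abs_sub_le_mul_log_sub_log {f f' : ℝ → ℝ} {a b C : ℝ} (ha : 0 < a) (hab : a ≤ b)
    (hf : ∀ t ∈ Icc a b, HasDerivAt f (f' t) t) (bound : ∀ t ∈ Icc a b, |t * f' t| ≤ C) :
    |f b - f a| ≤ C * log b - C * log a := by
  refine norm_sub_le_sub_of_norm_deriv_le hab hf
    (fun t ht => (hasDerivAt_log (ha.trans_le ht.1).ne').const_mul C) fun t ht => ?_
  have ht : 0 < t := ha.trans_le ht.1
  have h := bound t (Ico_subset_Icc_self ‹_›)
  rw [abs_mul, abs_of_pos ht] at h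
  rw [norm_eq_abs, ← div_eq_mul_inv, le_div_iff₀ ht]
  linarith

theorem tendsto_mul_nhdsGT_zero_of_abs_mul_deriv_le {f f' : ℝ → ℝ} {C : ℝ}
    (hf : ∀ t, 0 < t → HasDerivAt f (f' t) t) (bound : ∀ᶠ t in 𝓝[>] 0, |t * f' t| ≤ C) :
    Tendsto (fun x => x * f x) (𝓝[>] 0) (𝓝 0) := by
  obtain ⟨x₀, hx₀, hsub⟩ := mem_nhdsGT_iff_exists_Ioc_subset.mp bound
  have hx₀ : 0 < x₀ := hx₀
  have hmajor : ∀ x ∈ Ioc 0 x₀, |x * f x| ≤ x * (|f x₀| + C * log x₀) - C * (x * log x) := by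
    intro x ⟨hx, hxx₀⟩
    have hvar := abs_sub_le_mul_log_sub_log hx hxx₀ (fun t ht => hf t (hx.trans_le ht.1))
      fun t ht => hsub ⟨hx.trans_le ht.1, ht.2⟩
    have hfx : |f x| ≤ |f x₀| + (C * log x₀ - C * log x) := by
      have := abs_sub_abs_le_abs_sub (f x) (f x₀)
      rw [abs_sub_comm] at this
      linarith
    rw [abs_mul, abs_of_pos hx]
    nlinarith
  have hlim : Tendsto (fun x => x * (|f x₀| + C * log x₀) - C * (x * log x)) (𝓝[>] 0) (𝓝 0) := by
    refine (Continuous.tendsto' ?_ 0 0 (by simp)).mono_left nhdsWithin_le_nhds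
    exact (continuous_id.mul continuous_const).sub (continuous_const.mul continuous_mul_log)
  refine squeeze_zero_norm' ?_ hlim
  filter_upwards [Ioc_mem_nhdsGT hx₀] with x hx using hmajor x hx

theorem abs_deriv_le_of_abs_mul_deriv_le {f f' f'' : ℝ → ℝ} {x ε : ℝ} (hx : 0 < x)
    (hf : ∀ t ∈ Icc x (2 * x), HasDerivAt f (f' t) t)
    (hf' : ∀ t ∈ Icc x (2 * x), HasDerivAt f' (f'' t) t)
    (bound : ∀ t ∈ Icc x (2 * x), |t * f'' t| ≤ ε) :
    |f' x| ≤ |f (2 * x) - f x| / x + ε * log 2 := by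
  have hx2 : x < 2 * x := by linarith
  obtain ⟨ξ, hξ, hslope⟩ := exists_hasDerivAt_eq_slope f f' hx2
    (fun t ht => (hf t ht).continuousAt.continuousWithinAt)
    fun t ht => hf t (Ioo_subset_Icc_self ht)
  have hξx : |f' ξ - f' x| ≤ ε * log ξ - ε * log x :=
    abs_sub_le_mul_log_sub_log hx hξ.1.le (fun t ht => hf' t ⟨ht.1, ht.2.trans hξ.2.le⟩)
      fun t ht => bound t ⟨ht.1, ht.2.trans hξ.2.le⟩
  have hlog : log ξ - log x ≤ log 2 := by
    rw [← log_div (hx.trans hξ.1).ne' hx.ne']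
    exact log_le_log (div_pos (hx.trans hξ.1) hx) ((div_le_iff₀ hx).2 hξ.2.le)
  have hε : 0 ≤ ε := (abs_nonneg _).trans (bound x ⟨le_rfl, hx2.le⟩)
  have hfξ : |f' ξ| = |f (2 * x) - f x| / x := by
    rw [hslope, abs_div, show 2 * x - x = x by ring, abs_of_pos hx]
  calc |f' x| ≤ |f' ξ| + |f' ξ - f' x| := by
        have := abs_sub_abs_le_abs_sub (f' x) (f' ξ)
        rw [abs_sub_comm] at this
        linarith
    _ ≤ |f (2 * x) - f x| / x + ε * log 2 := by
        rw [hfξ]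
        nlinarith

theorem tendsto_zero_of_forall_eventually_abs_le {ι : Type*} {l : Filter ι} {f : ι → ℝ}
    (h : ∀ ε > 0, ∀ᶠ x in l, |f x| ≤ ε) : Tendsto f l (𝓝 0) :=
  Metric.tendsto_nhds.2 fun ε hε => (h (ε / 2) (half_pos hε)).mono fun x hx => by
    rw [dist_zero_right, norm_eq_abs]
    linarith

theorem tendsto_deriv_atTop_zero_of_tendsto {f f' f'' : ℝ → ℝ} {l : ℝ}
    (hf : ∀ t, 0 < t → HasDerivAt f (f' t) t) (hf' : ∀ t, 0 < t → HasDerivAt f' (f'' t) t)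
    (hl : Tendsto f atTop (𝓝 l)) (h : Tendsto (fun t => t * f'' t) atTop (𝓝 0)) :
    Tendsto f' atTop (𝓝 0) := by
  refine tendsto_zero_of_forall_eventually_abs_le fun ε hε => ?_
  have hdiff : Tendsto (fun x => |f (2 * x) - f x| / x) atTop (𝓝 0) := by
    have := ((hl.comp (tendsto_id.const_mul_atTop two_pos)).sub hl).abs
    simpa using this.div_atTop tendsto_id
  obtain ⟨T, hT⟩ := eventually_atTop.mp
    ((h.abs.eventually_le_const (show |(0 : ℝ)| < ε / 2 by simpa using half_pos hε)).and
      (eventually_gt_atTop 0))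
  filter_upwards [hdiff.eventually_le_const (half_pos hε), eventually_ge_atTop T]
    with x hxdiff hxT
  have hx : 0 < x := (hT x hxT).2
  have hpos : ∀ t ∈ Icc x (2 * x), 0 < t := fun t ht => hx.trans_le ht.1
  have hbound := abs_deriv_le_of_abs_mul_deriv_le hx (fun t ht => hf t (hpos t ht))
    (fun t ht => hf' t (hpos t ht)) fun t ht => (hT t (hxT.trans ht.1)).1
  have hlog2 : log 2 ≤ 1 := by
    have := log_le_sub_one_of_pos (two_pos (α := ℝ))
    linarith
  nlinarith

theorem hasDerivAt_rpow_mul {v w : ℝ → ℝ} {α t : ℝ} (ht : 0 < t) (hv : HasDerivAt v (w t) t) :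
    HasDerivAt (fun s => s ^ α * v s) (t ^ (α - 1) * (t * w t + α * v t)) t := by
  refine ((hasDerivAt_rpow_const (p := α) (Or.inl ht.ne')).mul hv).congr_deriv ?_
  rw [show t ^ α = t ^ (α - 1) * t by rw [← rpow_add_one ht.ne']; ring_nf]
  ring

/-- `t ^ α` is an integrating factor for `t v' + α v`. -/
theorem tendsto_atTop_zero_of_mul_deriv_add {v w : ℝ → ℝ} {α : ℝ} (hα : 0 < α)
    (hv : ∀ t, 0 < t → HasDerivAt v (w t) t)
    (h : Tendsto (fun t => t * w t + α * v t) atTop (𝓝 0)) :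
    Tendsto v atTop (𝓝 0) := by
  refine tendsto_zero_of_forall_eventually_abs_le fun ε hε => ?_
  obtain ⟨T, hT⟩ := eventually_atTop.mp
    ((h.abs.eventually_le_const
      (show |(0 : ℝ)| < α * (ε / 2) by simpa using mul_pos hα (half_pos hε))).and
        (eventually_gt_atTop 0))
  have hT₀ : 0 < T := (hT T le_rfl).2
  set g : ℝ → ℝ := fun s => s ^ α * v s
  have hdecay : Tendsto (fun x : ℝ => |g T| / x ^ α) atTop (𝓝 0) :=
    tendsto_const_nhds.div_atTop (tendsto_rpow_atTop hα)
  filter_upwards [hdecay.eventually_le_const (half_pos hε), eventually_ge_atTop T]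
    with x hxdecay hxT
  have hpos : ∀ t ∈ Icc T x, 0 < t := fun t ht => hT₀.trans_le ht.1
  have hvar : |g x - g T| ≤ ε / 2 * x ^ α - ε / 2 * T ^ α :=
    norm_sub_le_sub_of_norm_deriv_le hxT
      (fun t ht => hasDerivAt_rpow_mul (hpos t ht) (hv t (hpos t ht)))
      (fun t ht => (hasDerivAt_rpow_const (p := α) (Or.inl (hpos t ht).ne')).const_mul (ε / 2))
      fun t ht => by
        have ht₀ := hpos t (Ico_subset_Icc_self ht)
        have hbound := (hT t ht.1).1
        rw [norm_eq_abs, abs_mul, abs_of_pos (rpow_pos_of_pos ht₀ _)]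
        nlinarith [rpow_pos_of_pos ht₀ (α - 1)]
  have hxα : 0 < x ^ α := rpow_pos_of_pos (hT₀.trans_le hxT) α
  have hTα : 0 < T ^ α := rpow_pos_of_pos hT₀ α
  rw [div_le_iff₀ hxα] at hxdecay
  have hgx : |g x| = x ^ α * |v x| := by simp only [g, abs_mul, abs_of_pos hxα]
  have htri := abs_sub_abs_le_abs_sub (g x) (g T)
  nlinarith

theorem hasDerivAt_d1 {u : ℝ → ℝ} (hu : ContDiffOn ℝ 2 u (Ioi 0)) {t : ℝ} (ht : 0 < t) :
    HasDerivAt u (d1 u t) t := by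
  rw [d1, derivWithin_of_mem_nhds (Ici_mem_nhds ht)]
  exact ((hu.differentiableOn two_ne_zero).differentiableAt (Ioi_mem_nhds ht)).hasDerivAt

theorem hasDerivAt_d2 {u : ℝ → ℝ} (hu : ContDiffOn ℝ 2 u (Ioi 0)) {t : ℝ} (ht : 0 < t) :
    HasDerivAt (d1 u) (d2 u t) t := by
  have hd1 : d1 u =ᶠ[𝓝 t] deriv u := by
    filter_upwards [Ioi_mem_nhds ht] with s hs using derivWithin_of_mem_nhds (Ici_mem_nhds hs)
  have hderiv : DifferentiableAt ℝ (deriv u) t :=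
    ((hu.deriv_of_isOpen isOpen_Ioi (by norm_num)).differentiableOn one_ne_zero).differentiableAt
      (Ioi_mem_nhds ht)
  change HasDerivAt (d1 u) (derivWithin (d1 u) (Ici 0) t) t
  rw [derivWithin_of_mem_nhds (Ici_mem_nhds ht)]
  exact (hderiv.congr_of_eventuallyEq hd1).hasDerivAt

theorem stmt14_general (γ b : ℝ) (hγ : 0 < γ) (u : ℝ → ℝ)
    (hu : memDomain γ b u) :
    Filter.Tendsto (fun x => x * d1 u x) (nhdsWithin 0 (Set.Ioi 0)) (nhds 0) ∧
    Filter.Tendsto (fun x => d1 u x) Filter.atTop (nhds 0) := by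
  have hdivγ : ∀ {l : Filter ℝ} {g : ℝ → ℝ}, Tendsto (fun x => γ * x * g x) l (𝓝 0) →
      Tendsto (fun x => x * g x) l (𝓝 0) := fun h => by
    simpa [mul_assoc, hγ.ne'] using h.const_mul γ⁻¹
  rcases hu with ⟨hb, hC1, hC2, -, -, hinf⟩ | ⟨-, -, hC2, ⟨l, hl⟩, h0, hinf⟩
  · have hd1 : ContinuousWithinAt (d1 u) (Ioi 0) 0 :=
      (hC1.continuousOn_derivWithin (uniqueDiffOn_Ici 0) le_rfl 0 self_mem_Ici).mono
        Ioi_subset_Ici_self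
    refine ⟨by simpa using (tendsto_nhdsWithin_of_tendsto_nhds tendsto_id).mul hd1, ?_⟩
    refine tendsto_atTop_zero_of_mul_deriv_add (div_pos hb hγ) (fun t => hasDerivAt_d2 hC2) ?_
    have h := hinf.const_mul γ⁻¹
    rw [mul_zero] at h
    exact h.congr fun x => by field_simp
  · exact ⟨tendsto_mul_nhdsGT_zero_of_abs_mul_deriv_le (fun t => hasDerivAt_d2 hC2)
      ((hdivγ h0).abs.eventually_le_const (show |(0 : ℝ)| < 1 by norm_num)),
      tendsto_deriv_atTop_zero_of_tendsto (fun t => hasDerivAt_d1 hC2)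
        (fun t => hasDerivAt_d2 hC2) hl (hdivγ hinf)⟩

/-- Let `γ > 0`, `b ≥ 0` and `u ∈ D(A^{γ,b})`. Then `x u'(x) → 0` as `x → 0⁺` and
`u'(x) → 0` as `x → +∞`. -/
theorem stmt14 (γ b : ℝ) (hγ : 0 < γ) (hb : 0 ≤ b) (u : ℝ → ℝ)
    (hu : memDomain γ b u) :
    Filter.Tendsto (fun x => x * d1 u x) (nhdsWithin 0 (Set.Ioi 0)) (nhds 0) ∧
    Filter.Tendsto (fun x => d1 u x) Filter.atTop (nhds 0) :=
  stmt14_general γ b hγ u hu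
end

section
/- Let γ > 0 and b > 0, and let f : [0,∞) → ℝ be a bounded continuously differentiable function with bounded derivative f'. Then for every t > 0 and every x ≥ 0 one has (P_t^{γ,b} f)'(x) = e^{−x/(γt)} ∑_{m=0}^∞ (x/(γt))^m · 1/(m! Γ(m + b/γ + 1)) · ∫_0^∞ f'(γzt) z^{m + b/γ} e^{−z} dz. -/
/-!
Put `u = x / (γ t)`, `β = b / γ` and `M(s) = ∫₀^∞ e^{-z} z^{s-1} f(γ z t) dz`. Then
`P_t f(x) = e^{-u} ∑ a_m u^m` with `a_m = M(m + β) / (m! Γ(m + β))`. Since `|M(s)| ≤ ‖f‖_∞ Γ(s)`,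
`|a_m| ≤ ‖f‖_∞ / m!`, so the power series is entire and may be differentiated termwise:
`d/du (e^{-u} ∑ a_m u^m) = e^{-u} ∑ ((m + 1) a_{m+1} - a_m) u^m`. Integrating by parts against
`z^s e^{-z}` gives `M(s + 1) - s M(s) = γ t ∫₀^∞ f'(γ z t) z^s e^{-z} dz`, and together with
`Γ(s + 1) = s Γ(s)` this identifies `(m + 1) a_{m+1} - a_m` with `γ t` times the `m`-th coefficient
of the claimed series.
-/

open MeasureTheory

/-- The semigroup `P_t^{γ,b}` (case `b > 0`):
`P_t^{γ,b} f(x) = e^{−x/(γt)} ∑_{m=0}^∞ (x/(γt))^m (1/(m! Γ(m + b/γ)))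
  ∫_0^∞ e^{−z} z^{m + b/γ − 1} f(γzt) dz`. -/
noncomputable def Psem (γ b t : ℝ) (f : ℝ → ℝ) (x : ℝ) : ℝ :=
  Real.exp (-x / (γ * t)) *
    ∑' m : ℕ, (x / (γ * t)) ^ m * (1 / ((m.factorial : ℝ) * Real.Gamma ((m : ℝ) + b / γ))) *
      ∫ z in Set.Ioi (0:ℝ), Real.exp (-z) * z ^ ((m : ℝ) + b / γ - 1) * f (γ * z * t)

/-- The supremum norm of `f` over `[0, ∞)`. -/
noncomputable def supIci (f : ℝ → ℝ) : ℝ := ⨆ y : Set.Ici (0:ℝ), |f (y : ℝ)|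

open Set Filter Topology Real
open scoped Nat

noncomputable def gammaMoment (F : ℝ → ℝ) (s : ℝ) : ℝ :=
  ∫ z in Ioi 0, exp (-z) * z ^ (s - 1) * F z

lemma ae_norm_exp_neg_mul_rpow_mul_le {s K : ℝ} {F : ℝ → ℝ}
    (hK : ∀ z ∈ Ioi (0 : ℝ), |F z| ≤ K) :
    ∀ᵐ z ∂(volume.restrict (Ioi 0)),
      ‖exp (-z) * z ^ (s - 1) * F z‖ ≤ exp (-z) * z ^ (s - 1) * K := by
  filter_upwards [ae_restrict_mem measurableSet_Ioi] with z hz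
  have hweight : 0 ≤ exp (-z) * z ^ (s - 1) := by have : (0 : ℝ) < z := hz; positivity
  rw [norm_mul, Real.norm_of_nonneg hweight, Real.norm_eq_abs]
  exact mul_le_mul_of_nonneg_left (hK z hz) hweight

lemma integrableOn_exp_neg_mul_rpow_mul {s K : ℝ} (hs : 0 < s) {F : ℝ → ℝ}
    (hF : AEStronglyMeasurable F (volume.restrict (Ioi 0))) (hK : ∀ z ∈ Ioi (0 : ℝ), |F z| ≤ K) :
    IntegrableOn (fun z => exp (-z) * z ^ (s - 1) * F z) (Ioi 0) := by
  refine ((GammaIntegral_convergent hs).mul_const K).mono' ?_ (ae_norm_exp_neg_mul_rpow_mul_le hK)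
  exact (((continuous_exp.comp continuous_neg).continuousOn.mul
    (continuousOn_id.rpow_const fun z hz => Or.inl (ne_of_gt hz))).aestronglyMeasurable
      measurableSet_Ioi).mul hF

lemma abs_gammaMoment_le {s K : ℝ} (hs : 0 < s) {F : ℝ → ℝ} (hK : ∀ z ∈ Ioi (0 : ℝ), |F z| ≤ K) :
    |gammaMoment F s| ≤ K * Gamma s := by
  calc |gammaMoment F s| ≤ ∫ z in Ioi 0, exp (-z) * z ^ (s - 1) * K :=
        norm_integral_le_of_norm_le ((GammaIntegral_convergent hs).mul_const K)
          (ae_norm_exp_neg_mul_rpow_mul_le hK)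
    _ = K * Gamma s := by rw [integral_mul_const, Gamma_eq_integral hs, mul_comm]

lemma hasDerivAt_rpow_mul_exp_neg {s z : ℝ} (hz : 0 < z) :
    HasDerivAt (fun z => z ^ s * exp (-z))
      (s * z ^ (s - 1) * exp (-z) - z ^ s * exp (-z)) z :=
  ((hasDerivAt_rpow_const (Or.inl hz.ne')).fun_mul (hasDerivAt_neg z).exp).congr_deriv (by ring)

lemma gammaMoment_add_one_of_hasDerivAt {s K₀ K₁ : ℝ} (hs : 0 < s) {F F' : ℝ → ℝ}
    (hF : ∀ z ∈ Ioi (0 : ℝ), HasDerivAt F (F' z) z) (hF' : ContinuousOn F' (Ioi 0))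
    (hFb : ∀ z ∈ Ioi (0 : ℝ), |F z| ≤ K₀) (hF'b : ∀ z ∈ Ioi (0 : ℝ), |F' z| ≤ K₁) :
    gammaMoment F' (s + 1) = gammaMoment F (s + 1) - s * gammaMoment F s := by
  set v : ℝ → ℝ := fun z => z ^ s * exp (-z)
  set v' : ℝ → ℝ := fun z => s * z ^ (s - 1) * exp (-z) - z ^ s * exp (-z)
  have hv : ∀ z ∈ Ioi (0 : ℝ), HasDerivAt v (v' z) z := fun z hz => hasDerivAt_rpow_mul_exp_neg hz
  have hFm : AEStronglyMeasurable F (volume.restrict (Ioi 0)) :=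
    (HasDerivAt.continuousOn hF).aestronglyMeasurable measurableSet_Ioi
  have hs1 : s + 1 - 1 = s := add_sub_cancel_right s 1
  have hIs := integrableOn_exp_neg_mul_rpow_mul hs hFm hFb
  have hIs1 := integrableOn_exp_neg_mul_rpow_mul (by linarith : 0 < s + 1) hFm hFb
  have hI' := integrableOn_exp_neg_mul_rpow_mul (by linarith : 0 < s + 1)
    (hF'.aestronglyMeasurable measurableSet_Ioi) hF'b
  simp only [hs1] at hIs1 hI'
  have hFv_lim : ∀ l : Filter ℝ, Ioi 0 ∈ l → Tendsto v l (𝓝 0) → Tendsto (F * v) l (𝓝 0) := by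
    intro l hl hvl
    refine squeeze_zero_norm' (f := F * v) (a := fun z => K₀ * v z) ?_
      (by simpa using hvl.const_mul K₀)
    filter_upwards [hl] with z hz
    have hvz : 0 ≤ v z := by have : (0 : ℝ) < z := hz; positivity
    rw [Pi.mul_apply, norm_mul, Real.norm_eq_abs, Real.norm_of_nonneg hvz]
    exact mul_le_mul_of_nonneg_right (hFb z hz) hvz
  have hv0 : Tendsto v (𝓝[>] 0) (𝓝 0) := by
    have : ContinuousAt v 0 :=
      (continuousAt_rpow_const 0 s (Or.inr hs.le)).mul
        (continuous_exp.comp continuous_neg).continuousAt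
    simpa [v, zero_rpow hs.ne'] using this.tendsto.mono_left nhdsWithin_le_nhds
  have hv_top : Tendsto v atTop (𝓝 0) := by
    simpa [v] using tendsto_rpow_mul_exp_neg_mul_atTop_nhds_zero s 1 one_pos
  have hIBP := integral_Ioi_mul_deriv_eq_deriv_mul hF hv
    (IntegrableOn.congr_fun ((hIs.const_mul s).sub hIs1)
      (fun z _ => by simp only [Pi.mul_apply, Pi.sub_apply, v']; ring) measurableSet_Ioi)
    (IntegrableOn.congr_fun hI' (fun z _ => by simp only [Pi.mul_apply, v]; ring) measurableSet_Ioi)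
    (hFv_lim _ self_mem_nhdsWithin hv0) (hFv_lim _ (Ioi_mem_atTop 0) hv_top)
  have hM' : gammaMoment F' (s + 1) = ∫ z in Ioi 0, F' z * v z := by
    simp only [gammaMoment, hs1, v]
    congr 1; funext z; ring
  have hFv' : ∫ z in Ioi 0, F z * v' z = s * gammaMoment F s - gammaMoment F (s + 1) := by
    rw [gammaMoment, gammaMoment, hs1, ← integral_const_mul, ← integral_sub (hIs.const_mul s) hIs1]
    congr 1; funext z; simp only [v']; ring
  linarith

section PowerSeries

variable {a : ℕ → ℝ} {K : ℝ}

lemma summable_mul_pow_of_abs_le_div_factorial (ha : ∀ m, |a m| ≤ K / m !) (x : ℝ) :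
    Summable fun m => a m * x ^ m := by
  refine .of_norm_bounded ((summable_pow_div_factorial |x|).mul_left K) fun m => ?_
  calc ‖a m * x ^ m‖ = |a m| * |x| ^ m := by
        rw [norm_mul, norm_pow, Real.norm_eq_abs, Real.norm_eq_abs]
    _ ≤ K / m ! * |x| ^ m := by gcongr; exact ha m
    _ = K * (|x| ^ m / m !) := by ring

lemma abs_succ_mul_le_div_factorial (ha : ∀ m, |a m| ≤ K / m !) (m : ℕ) :
    |(m + 1) * a (m + 1)| ≤ K / m ! := by
  rw [abs_mul, abs_of_nonneg (by positivity)]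
  calc ((m : ℝ) + 1) * |a (m + 1)| ≤ (m + 1) * (K / (m + 1) !) := by gcongr; exact ha _
    _ = K / m ! := by rw [Nat.factorial_succ]; push_cast; field_simp

lemma hasDerivAt_tsum_mul_pow (ha : ∀ m, |a m| ≤ K / m !) (x : ℝ) :
    HasDerivAt (fun y => ∑' m, a m * y ^ m) (∑' m, (m + 1) * a (m + 1) * x ^ m) x := by
  have hsplit : (fun y => ∑' m, a m * y ^ m) = fun y => a 0 + ∑' m, a (m + 1) * y ^ (m + 1) := by
    funext y
    rw [(summable_mul_pow_of_abs_le_div_factorial ha y).tsum_eq_zero_add, pow_zero, mul_one]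
  set R := |x| + 1
  have hx : x ∈ Ioo (-R) R := abs_lt.mp (lt_add_one _)
  rw [hsplit]
  refine HasDerivAt.const_add _ <| hasDerivAt_tsum_of_isPreconnected
    (g' := fun m y => (m + 1) * a (m + 1) * y ^ m) ((summable_pow_div_factorial R).mul_left K)
    isOpen_Ioo isPreconnected_Ioo
    (fun m y _ => ((hasDerivAt_pow (m + 1) y).const_mul (a (m + 1))).congr_deriv ?_)
    (fun m y hy => ?_) hx
    ((summable_nat_add_iff 1).mpr (summable_mul_pow_of_abs_le_div_factorial ha x)) hx
  · push_cast
    ring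
  · calc ‖(m + 1) * a (m + 1) * y ^ m‖ = |(m + 1) * a (m + 1)| * |y| ^ m := by
          rw [norm_mul, norm_pow, Real.norm_eq_abs, Real.norm_eq_abs]
      _ ≤ K / m ! * R ^ m := by
          have hb := abs_succ_mul_le_div_factorial ha m
          exact mul_le_mul hb (pow_le_pow_left₀ (abs_nonneg y) (abs_lt.mpr hy).le m)
            (by positivity) ((abs_nonneg _).trans hb)
      _ = K * (R ^ m / m !) := by ring

lemma hasDerivAt_exp_neg_mul_tsum_mul_pow (ha : ∀ m, |a m| ≤ K / m !) (x : ℝ) :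
    HasDerivAt (fun y => exp (-y) * ∑' m, a m * y ^ m)
      (exp (-x) * ∑' m, ((m + 1) * a (m + 1) - a m) * x ^ m) x := by
  refine ((hasDerivAt_neg x).exp.mul (hasDerivAt_tsum_mul_pow ha x)).congr_deriv ?_
  simp only [sub_mul]
  rw [(summable_mul_pow_of_abs_le_div_factorial (abs_succ_mul_le_div_factorial ha) x).tsum_sub
    (summable_mul_pow_of_abs_le_div_factorial ha x)]
  ring

end PowerSeries

noncomputable def gammaCoeff (F : ℝ → ℝ) (β : ℝ) (m : ℕ) : ℝ :=
  gammaMoment F (m + β) / (m ! * Gamma (m + β))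

section GammaCoeff

variable {β K₀ : ℝ} {F : ℝ → ℝ}

lemma abs_gammaCoeff_le (hβ : 0 < β) (hK : ∀ z ∈ Ioi (0 : ℝ), |F z| ≤ K₀) (m : ℕ) :
    |gammaCoeff F β m| ≤ K₀ / m ! := by
  have hs : 0 < (m : ℝ) + β := by positivity
  have hΓ := Gamma_pos_of_pos hs
  rw [gammaCoeff, abs_div, abs_of_pos (by positivity : (0 : ℝ) < m ! * Gamma (m + β)),
    div_le_div_iff₀ (by positivity) (by positivity)]
  calc |gammaMoment F (m + β)| * m ! ≤ K₀ * Gamma (m + β) * m ! := by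
        gcongr; exact abs_gammaMoment_le hs hK
    _ = K₀ * (m ! * Gamma (m + β)) := by ring

lemma succ_mul_gammaCoeff_succ_sub {K₁ : ℝ} {F' : ℝ → ℝ} (hβ : 0 < β)
    (hF : ∀ z ∈ Ioi (0 : ℝ), HasDerivAt F (F' z) z) (hF' : ContinuousOn F' (Ioi 0))
    (hFb : ∀ z ∈ Ioi (0 : ℝ), |F z| ≤ K₀) (hF'b : ∀ z ∈ Ioi (0 : ℝ), |F' z| ≤ K₁) (m : ℕ) :
    (m + 1) * gammaCoeff F β (m + 1) - gammaCoeff F β m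
      = gammaMoment F' (m + β + 1) / (m ! * Gamma (m + β + 1)) := by
  have hs : 0 < (m : ℝ) + β := by positivity
  have hΓ := Gamma_pos_of_pos hs
  rw [gammaMoment_add_one_of_hasDerivAt hs hF hF' hFb hF'b, gammaCoeff, gammaCoeff,
    Nat.factorial_succ]
  push_cast
  rw [show (m : ℝ) + 1 + β = m + β + 1 by ring, Gamma_add_one hs.ne']
  field_simp

end GammaCoeff

lemma hasDerivAt_exp_neg_mul_tsum_gammaCoeff_comp_div {β c K₀ K₁ : ℝ} {F F' : ℝ → ℝ}
    (hβ : 0 < β) (hF : ∀ z ∈ Ioi (0 : ℝ), HasDerivAt F (F' z) z) (hF' : ContinuousOn F' (Ioi 0))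
    (hFb : ∀ z ∈ Ioi (0 : ℝ), |F z| ≤ K₀) (hF'b : ∀ z ∈ Ioi (0 : ℝ), |F' z| ≤ K₁) (x : ℝ) :
    HasDerivAt ((fun y => exp (-y) * ∑' m, gammaCoeff F β m * y ^ m) ∘ (· / c))
      (exp (-(x / c)) * ∑' m : ℕ,
        (x / c) ^ m * (1 / (m ! * Gamma (m + β + 1))) * (gammaMoment F' (m + β + 1) / c)) x := by
  refine ((hasDerivAt_exp_neg_mul_tsum_mul_pow (abs_gammaCoeff_le hβ hFb) (x / c)).comp x
    ((hasDerivAt_id' x).div_const c)).congr_deriv ?_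
  rw [mul_assoc, ← tsum_mul_right]
  congr 1
  refine tsum_congr fun m => ?_
  rw [succ_mul_gammaCoeff_succ_sub hβ hF hF' hFb hF'b]
  ring

lemma Psem_eq_comp_div (γ b t : ℝ) (f : ℝ → ℝ) :
    Psem γ b t f =
      (fun y => exp (-y) * ∑' m, gammaCoeff (fun z => f (γ * z * t)) (b / γ) m * y ^ m)
        ∘ (· / (γ * t)) := by
  funext x
  simp only [Psem, Function.comp_apply, gammaCoeff, gammaMoment, neg_div]
  congr 1
  exact tsum_congr fun m => by ring

/-- Let `γ > 0`, `b > 0` and let `f : [0,∞) → ℝ` be bounded, continuously differentiable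
with bounded derivative. Then for every `t > 0` and `x ≥ 0`,
`(P_t^{γ,b} f)'(x) = e^{−x/(γt)} ∑_{m=0}^∞ (x/(γt))^m (1/(m! Γ(m + b/γ + 1)))
  ∫_0^∞ f'(γzt) z^{m + b/γ} e^{−z} dz`. -/
theorem stmt18 (γ b : ℝ) (hγ : 0 < γ) (hb : 0 < b) (f : ℝ → ℝ)
    (hf : ContDiffOn ℝ 1 f (Set.Ici 0))
    (hbd0 : ∃ K, ∀ x ≥ (0:ℝ), |f x| ≤ K)
    (hbd1 : ∃ K, ∀ x ≥ (0:ℝ), |derivWithin f (Set.Ici 0) x| ≤ K)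
    (t : ℝ) (ht : 0 < t) (x : ℝ) (hx : 0 ≤ x) :
    derivWithin (Psem γ b t f) (Set.Ici 0) x =
      Real.exp (-x / (γ * t)) *
        ∑' m : ℕ, (x / (γ * t)) ^ m * (1 / ((m.factorial : ℝ) * Real.Gamma ((m : ℝ) + b / γ + 1))) *
          ∫ z in Set.Ioi (0:ℝ),
            derivWithin f (Set.Ici 0) (γ * z * t) * z ^ ((m : ℝ) + b / γ) * Real.exp (-z) := by
  obtain ⟨K₀, hK₀⟩ := hbd0
  obtain ⟨K₁, hK₁⟩ := hbd1
  set f' := derivWithin f (Ici 0)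
  have hc : 0 < γ * t := mul_pos hγ ht
  have hpos : MapsTo (fun z => γ * z * t) (Ioi 0) (Ioi 0) := fun z (hz : 0 < z) => by
    simp only [mem_Ioi]; positivity
  have hFd : ∀ z ∈ Ioi (0 : ℝ), HasDerivAt (fun z => f (γ * z * t)) (γ * t * f' (γ * z * t)) z :=
    fun z hz => ((hf.differentiableOn one_ne_zero _ (Ioi_subset_Ici_self (hpos hz)))
      |>.hasDerivWithinAt.hasDerivAt (Ici_mem_nhds (hpos hz))).comp z
        (((hasDerivAt_id' z).const_mul γ).mul_const t) |>.congr_deriv (by ring)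
  have hF'c : ContinuousOn (fun z => γ * t * f' (γ * z * t)) (Ioi 0) :=
    continuousOn_const.mul (((hf.continuousOn_derivWithin (uniqueDiffOn_Ici 0) le_rfl).mono
      Ioi_subset_Ici_self).comp (by fun_prop) hpos)
  have hF'b : ∀ z ∈ Ioi (0 : ℝ), |γ * t * f' (γ * z * t)| ≤ γ * t * K₁ := fun z hz => by
    rw [abs_mul, abs_of_pos hc]
    exact mul_le_mul_of_nonneg_left (hK₁ _ (hpos hz).le) hc.le
  rw [Psem_eq_comp_div, (hasDerivAt_exp_neg_mul_tsum_gammaCoeff_comp_div (div_pos hb hγ) hFd hF'c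
    (fun z hz => hK₀ _ (hpos hz).le) hF'b x).hasDerivWithinAt.derivWithin
      (uniqueDiffOn_Ici 0 x hx), neg_div]
  congr 1
  refine tsum_congr fun m => congrArg _ ?_
  rw [gammaMoment, add_sub_cancel_right, ← integral_div]
  congr 1; funext z
  field_simp
end
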